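/- The oriented chromatic number is unbounded on the family LE_2: for every positive integer k there exists a strong asymmetrical digraph D admitting an ear decomposition in which every ear has length at least 2 (i.e., D ∈ LE_2) such that χ_o(D) > k. Hence the hypothesis of ears of length at least 3 in the bound χ_o ≤ 6 for LE_3 cannot be relaxed to length at least 2. -/

import Mathlib

/-- A digraph on a vertex type `V`: a set of vertices together with an arc
relation whose endpoints lie in the vertex set.  (No loops are allowed in this
paper; this is the hypothesis `Digr.Loopless` below.  Multiple arcs cannot be
represented.) -/
structure Digr (V : Type) where
  verts : Set V
  Adj : V → V → Prop
  adj_dom : ∀ ⦃u v : V⦄, Adj u v → u ∈ verts ∧ v ∈ verts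

namespace Digr

variable {V : Type}

/-- A digraph has no loops. -/
def Loopless (D : Digr V) : Prop := ∀ v, ¬ D.Adj v v

/-- An asymmetrical digraph (an oriented graph): it never contains both arcs
`(u,v)` and `(v,u)`. -/
def Asymmetrical (D : Digr V) : Prop := ∀ u v, D.Adj u v → ¬ D.Adj v u

/-- `H` is a subdigraph of `D`. -/
def IsSubdigraph (H D : Digr V) : Prop :=
  H.verts ⊆ D.verts ∧ ∀ ⦃u v⦄, H.Adj u v → D.Adj u v

/-- Union of two digraphs. -/
def union (D₁ D₂ : Digr V) : Digr V where
  verts := D₁.verts ∪ D₂.verts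
  Adj u v := D₁.Adj u v ∨ D₂.Adj u v
  adj_dom := by
    rintro u v (h | h)
    · exact ⟨Or.inl (D₁.adj_dom h).1, Or.inl (D₁.adj_dom h).2⟩
    · exact ⟨Or.inr (D₂.adj_dom h).1, Or.inr (D₂.adj_dom h).2⟩

/-- A digraph is strong if every vertex can reach every vertex by a directed
walk (equivalently, by a directed path). -/
def IsStrong (D : Digr V) : Prop :=
  ∀ x ∈ D.verts, ∀ y ∈ D.verts, Relation.ReflTransGen D.Adj x y

/-- `D` is precisely a directed cycle with `n` vertices (`n ≥ 2`). -/
def IsCycleOfLength (D : Digr V) (n : ℕ) : Prop :=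
  2 ≤ n ∧ ∃ f : ZMod n → V, Function.Injective f ∧
    D.verts = Set.range f ∧ ∀ u v, (D.Adj u v ↔ ∃ i, u = f i ∧ v = f (i + 1))

/-- `D` is precisely a directed cycle. -/
def IsCycleDigr (D : Digr V) : Prop := ∃ n, D.IsCycleOfLength n

/-- The underlying (undirected) simple graph on the vertex set of `D`. -/
def UG (D : Digr V) : SimpleGraph D.verts where
  Adj u v := u ≠ v ∧ (D.Adj u v ∨ D.Adj v u)
  symm := ⟨by rintro u v ⟨hne, h⟩; exact ⟨hne.symm, h.symm⟩⟩
  loopless := ⟨by rintro u ⟨hne, _⟩; exact hne rfl⟩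

/-- `D` is nonseparable: its underlying graph is connected and deleting any
single vertex leaves it connected (no cut vertex). -/
def IsNonseparable (D : Digr V) : Prop :=
  D.UG.Connected ∧ ∀ v : D.verts, (D.UG.induce {u | u ≠ v}).Connected

/-- The out-neighbourhood `N⁺(v)`. -/
def outNbhd (D : Digr V) (v : V) : Set V := {u | D.Adj v u}

/-- The second out-neighbourhood `N⁺⁺(v) = (⋃ u ∈ N⁺(v), N⁺(u)) \ N⁺(v)`. -/
def secondOutNbhd (D : Digr V) (v : V) : Set V :=
  {w | ∃ u, D.Adj v u ∧ D.Adj u w} \ D.outNbhd v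

end Digr

/-- An independent set of vertices: no arc between two distinct members. -/
def IsIndependent {V : Type} (D : Digr V) (S : Set V) : Prop :=
  ∀ u ∈ S, ∀ v ∈ S, u ≠ v → ¬ D.Adj u v

/-- An absorbent set: every vertex outside it has an out-neighbour inside it. -/
def IsAbsorbent {V : Type} (D : Digr V) (S : Set V) : Prop :=
  ∀ u ∈ D.verts, u ∉ S → ∃ v ∈ S, D.Adj u v

/-- A kernel: an independent absorbent set of vertices. -/
def IsKernel {V : Type} (D : Digr V) (N : Set V) : Prop :=
  N ⊆ D.verts ∧ IsIndependent D N ∧ IsAbsorbent D N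

/-- `D` has a kernel. -/
def HasKernel {V : Type} (D : Digr V) : Prop := ∃ N, IsKernel D N

/-- A quasi-kernel: an independent set such that every outside vertex reaches
it by a directed path of length at most 2. -/
def IsQuasiKernel {V : Type} (D : Digr V) (Q : Set V) : Prop :=
  Q ⊆ D.verts ∧ IsIndependent D Q ∧
    ∀ u ∈ D.verts, u ∉ Q → ∃ v ∈ Q, (D.Adj u v ∨ ∃ w, D.Adj u w ∧ D.Adj w v)

/-- A finite sequence `x 0, x 1, ..., x len` of vertices. -/
structure VSeq (V : Type) where
  len : ℕ
  x : ℕ → V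

namespace VSeq

variable {V : Type}

/-- The digraph consisting of the vertices and consecutive arcs of the
sequence. -/
def toDigr (s : VSeq V) : Digr V where
  verts := s.x '' {i | i ≤ s.len}
  Adj u v := ∃ i < s.len, u = s.x i ∧ v = s.x (i + 1)
  adj_dom := by
    rintro u v ⟨i, hi, rfl, rfl⟩
    exact ⟨⟨i, le_of_lt hi, rfl⟩, ⟨i + 1, hi, rfl⟩⟩

end VSeq

/-- `e` is an ear of `H` in `D`: a directed path (or a directed cycle, when
the two end vertices coincide) of `D` whose end vertices lie in `H` and whose
internal vertices are pairwise distinct and do not lie in `H`. -/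
def IsEarOf {V : Type} (D H : Digr V) (e : VSeq V) : Prop :=
  1 ≤ e.len ∧
  (∀ i < e.len, D.Adj (e.x i) (e.x (i + 1))) ∧
  e.x 0 ∈ H.verts ∧ e.x e.len ∈ H.verts ∧
  (∀ i, 0 < i → i < e.len → e.x i ∉ H.verts) ∧
  (∀ i ≤ e.len, ∀ j ≤ e.len, e.x i = e.x j →
    i = j ∨ (i = 0 ∧ j = e.len) ∨ (i = e.len ∧ j = 0))

/-- A directed path in `D`, given by its sequence of (distinct) vertices. -/
def Digr.IsPathIn {V : Type} (D : Digr V) (p : VSeq V) : Prop :=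
  (∀ i ≤ p.len, p.x i ∈ D.verts) ∧
  (∀ i < p.len, D.Adj (p.x i) (p.x (i + 1))) ∧
  ∀ i ≤ p.len, ∀ j ≤ p.len, p.x i = p.x j → i = j

/-- An ear decomposition `(D_0, D_1, ..., D_k)` of the strong digraph `D`:
`D_0` is a directed cycle, `D_{i+1} = D_i ∪ P_i` for an ear `P_i` of `D_i`
in `D`, each `D_i` is a strong subdigraph of `D`, and `D_k = D`. -/
structure EarDecomp {V : Type} (D : Digr V) where
  k : ℕ
  Ds : ℕ → Digr V
  ears : ℕ → VSeq V
  base : (Ds 0).IsCycleDigr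
  strong : ∀ i ≤ k, (Ds i).IsStrong
  sub : ∀ i ≤ k, (Ds i).IsSubdigraph D
  isEar : ∀ i < k, IsEarOf D (Ds i) (ears i)
  step : ∀ i < k, Ds (i + 1) = (Ds i).union (ears i).toDigr
  top : Ds k = D

/-- `D` belongs to the family `LE_L`: it has an ear decomposition all of whose
ears have length at least `L`. -/
def InLE {V : Type} (D : Digr V) (L : ℕ) : Prop :=
  ∃ E : EarDecomp D, ∀ i < E.k, L ≤ (E.ears i).len

/-- `T` is a tournament on `Fin n`: exactly one arc between any two distinct
vertices, and no loops. -/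
def IsTournament {n : ℕ} (T : Fin n → Fin n → Prop) : Prop :=
  (∀ v, ¬ T v v) ∧ ∀ u v : Fin n, u ≠ v → (T u v ↔ ¬ T v u)

/-- There is a directed walk of length `k` from `u` to `v` in `T`. -/
def HasWalkOfLength {n : ℕ} (T : Fin n → Fin n → Prop) (k : ℕ) (u v : Fin n) :
    Prop :=
  ∃ w : ℕ → Fin n, w 0 = u ∧ w k = v ∧ ∀ m < k, T (w m) (w (m + 1))

/-- The oriented chromatic number of `D` is at most `m`: there is a tournament
on `m` vertices and a digraph homomorphism of `D` into it. -/
def OrientedChromAtMost {V : Type} (D : Digr V) (m : ℕ) : Prop :=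
  ∃ T : Fin m → Fin m → Prop, IsTournament T ∧
    ∃ φ : V → Fin m, ∀ u v, D.Adj u v → T (φ u) (φ v)



namespace LE2

theorem Digr.ext' {V : Type} {D₁ D₂ : Digr V} (h1 : D₁.verts = D₂.verts)
    (h2 : D₁.Adj = D₂.Adj) : D₁ = D₂ := by
  cases D₁; cases D₂
  simp only at h1 h2
  subst h1; subst h2
  rfl

abbrev Vt : Type := ℕ ⊕ ℕ × ℕ

def good (n : ℕ) : Set (ℕ × ℕ) := {p | p.1 < n ∧ p.2 < n ∧ p.1 ≠ p.2}

def subD (n : ℕ) (S : Set (ℕ × ℕ)) : Digr Vt where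
  verts := (Sum.inl '' {i | i < n}) ∪ (Sum.inr '' (S ∩ good n))
  Adj u v := ∃ p ∈ S ∩ good n,
    (u = Sum.inl p.1 ∧ v = Sum.inr p) ∨ (u = Sum.inr p ∧ v = Sum.inl p.2)
  adj_dom := by
    rintro u v ⟨p, hp, (⟨rfl, rfl⟩ | ⟨rfl, rfl⟩)⟩
    · exact ⟨Or.inl ⟨p.1, hp.2.1, rfl⟩, Or.inr ⟨p, hp, rfl⟩⟩
    · exact ⟨Or.inr ⟨p, hp, rfl⟩, Or.inl ⟨p.2, hp.2.2.1, rfl⟩⟩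

def bigD (n : ℕ) : Digr Vt := subD n Set.univ

def cycS (n : ℕ) : Set (ℕ × ℕ) := {p | p.1 < n ∧ p.2 = (p.1 + 1) % n}

def eI (n s : ℕ) : ℕ × ℕ := (s / (n - 2), (s / (n - 2) + 2 + s % (n - 2)) % n)

def earSeq (n s : ℕ) : VSeq Vt :=
  ⟨2, fun t => if t = 0 then Sum.inl (eI n s).1
      else if t = 1 then Sum.inr (eI n s) else Sum.inl (eI n s).2⟩

def Ssets (n s : ℕ) : Set (ℕ × ℕ) := cycS n ∪ eI n '' {t | t < s}

lemma succ_mod_ne {n i : ℕ} (hn : 2 ≤ n) (hi : i < n) : (i + 1) % n ≠ i := by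
  intro h
  rcases Nat.lt_or_ge (i + 1) n with h' | h'
  · rw [Nat.mod_eq_of_lt h'] at h; omega
  · have : i + 1 = n := by omega
    rw [this, Nat.mod_self] at h; omega

lemma cycS_subset_good {n : ℕ} (hn : 2 ≤ n) : cycS n ⊆ good n := by
  rintro ⟨i, j⟩ ⟨hi, hj⟩
  simp only at hi hj
  subst hj
  exact ⟨hi, Nat.mod_lt _ (by omega), fun h => succ_mod_ne hn hi h.symm⟩

lemma subD_eq {n : ℕ} {S₁ S₂ : Set (ℕ × ℕ)} (h : S₁ ∩ good n = S₂ ∩ good n) :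
    subD n S₁ = subD n S₂ := by
  apply Digr.ext' <;> simp only [subD, h]

-- arithmetic facts about the ear enumeration
lemma eI_lt {n s : ℕ} (hs : s < n * (n - 2)) : s / (n - 2) < n :=
  Nat.div_lt_of_lt_mul (by rwa [Nat.mul_comm] at hs)

lemma mod_add_inj {n i a b : ℕ} (ha : a < n) (hb : b < n)
    (h : (i + a) % n = (i + b) % n) : a = b := by
  have h2 := Nat.ModEq.add_left_cancel' (c := i) h
  have h3 : a % n = b % n := h2
  rwa [Nat.mod_eq_of_lt ha, Nat.mod_eq_of_lt hb] at h3

lemma eI_good {n s : ℕ} (hs : s < n * (n - 2)) : eI n s ∈ good n := by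
  have h2 : 0 < n - 2 := by
    rcases Nat.eq_zero_or_pos (n - 2) with h | h
    · simp [h] at hs
    · exact h
  have hn : 3 ≤ n := by omega
  have hi : s / (n - 2) < n := eI_lt hs
  have hr : s % (n - 2) < n - 2 := Nat.mod_lt _ h2
  refine ⟨hi, Nat.mod_lt _ (by omega), ?_⟩
  intro h
  simp only [eI] at h
  set i := s / (n - 2) with hidef
  set r := s % (n - 2) with hrdef
  have h' : (i + (2 + r)) % n = (i + 0) % n := by
    rw [← Nat.add_assoc, add_zero, Nat.mod_eq_of_lt hi]
    exact h.symm
  have := mod_add_inj (by omega) (by omega) h'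
  omega

lemma eI_not_cycS {n s : ℕ} (hs : s < n * (n - 2)) : eI n s ∉ cycS n := by
  have h2 : 0 < n - 2 := by
    rcases Nat.eq_zero_or_pos (n - 2) with h | h
    · simp [h] at hs
    · exact h
  have hn : 3 ≤ n := by omega
  have hi : s / (n - 2) < n := eI_lt hs
  have hr : s % (n - 2) < n - 2 := Nat.mod_lt _ h2
  rintro ⟨-, hj⟩
  simp only [eI] at hj
  set i := s / (n - 2) with hidef
  set r := s % (n - 2) with hrdef
  have h' : (i + (2 + r)) % n = (i + 1) % n := by
    rw [← Nat.add_assoc]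
    exact hj
  have := mod_add_inj (a := 2 + r) (b := 1) (by omega) (by omega) h'
  omega

lemma eI_inj {n s t : ℕ} (hs : s < n * (n - 2)) (ht : t < n * (n - 2))
    (h : eI n s = eI n t) : s = t := by
  have h2 : 0 < n - 2 := by
    rcases Nat.eq_zero_or_pos (n - 2) with h | h
    · simp [h] at hs
    · exact h
  have hn : 3 ≤ n := by omega
  have h1 : s / (n - 2) = t / (n - 2) := congrArg Prod.fst h
  have h2' : (s / (n-2) + 2 + s % (n-2)) % n = (t / (n-2) + 2 + t % (n-2)) % n :=
    congrArg Prod.snd h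
  rw [← h1] at h2'
  have hrs : s % (n - 2) < n - 2 := Nat.mod_lt _ h2
  have hrt : t % (n - 2) < n - 2 := Nat.mod_lt _ h2
  have h4 := mod_add_inj (i := s / (n-2) + 2) (by omega) (by omega) h2'
  calc s = (n - 2) * (s / (n - 2)) + s % (n - 2) := (Nat.div_add_mod _ _).symm
    _ = (n - 2) * (t / (n - 2)) + t % (n - 2) := by rw [h1, h4]
    _ = t := Nat.div_add_mod _ _

lemma good_covered {n : ℕ} (hn : 2 ≤ n) {p : ℕ × ℕ} (hp : p ∈ good n) :
    p ∈ cycS n ∨ ∃ s < n * (n - 2), eI n s = p := by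
  obtain ⟨i, j⟩ := p
  obtain ⟨hi, hj, hij⟩ := hp
  by_cases hc : j = (i + 1) % n
  · exact Or.inl ⟨hi, hc⟩
  · right
    set r := (j + 2 * n - i - 2) % n with hr
    have hrn : r < n := Nat.mod_lt _ (by omega)
    have key2 : (i + 2 + r) % n = j := by
      have h1 : (i + 2 + r) % n = (i + 2 + (j + 2 * n - i - 2)) % n := by
        rw [hr, Nat.add_mod_mod]
      have he : i + 2 + (j + 2 * n - i - 2) = j + n * 2 := by omega
      rw [h1, he, Nat.add_mul_mod_self_left, Nat.mod_eq_of_lt hj]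
    have hr2 : r ≠ n - 2 := by
      intro h
      rw [h] at key2
      have he : i + 2 + (n - 2) = i + n * 1 := by omega
      rw [he, Nat.add_mul_mod_self_left, Nat.mod_eq_of_lt hi] at key2
      exact hij key2
    have hr1 : r ≠ n - 1 := by
      intro h
      rw [h] at key2
      have he : i + 2 + (n - 1) = (i + 1) + n * 1 := by omega
      rw [he, Nat.add_mul_mod_self_left] at key2
      exact hc key2.symm
    have hrlt : r < n - 2 := by omega
    refine ⟨(n - 2) * i + r, ?_, ?_⟩
    · calc (n - 2) * i + r < (n - 2) * (i + 1) := by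
            rw [Nat.mul_add, Nat.mul_one]; omega
        _ ≤ (n - 2) * n := Nat.mul_le_mul_left _ (by omega)
        _ = n * (n - 2) := Nat.mul_comm _ _
    · have hd : ((n - 2) * i + r) / (n - 2) = i := by
        rw [Nat.mul_add_div (by omega), Nat.div_eq_of_lt hrlt, Nat.add_zero]
      have hm : ((n - 2) * i + r) % (n - 2) = r := by
        rw [Nat.mul_add_mod, Nat.mod_eq_of_lt hrlt]
      simp only [eI, hd, hm, key2]

lemma subD_adj_am {n : ℕ} {S : Set (ℕ × ℕ)} {p : ℕ × ℕ} (hp : p ∈ S ∩ good n) :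
    (subD n S).Adj (Sum.inl p.1) (Sum.inr p) := ⟨p, hp, Or.inl ⟨rfl, rfl⟩⟩

lemma subD_adj_ma {n : ℕ} {S : Set (ℕ × ℕ)} {p : ℕ × ℕ} (hp : p ∈ S ∩ good n) :
    (subD n S).Adj (Sum.inr p) (Sum.inl p.2) := ⟨p, hp, Or.inr ⟨rfl, rfl⟩⟩

lemma reach_aux {n : ℕ} (hn : 2 ≤ n) {S : Set (ℕ × ℕ)} (hS : cycS n ⊆ S) :
    ∀ t i, i < n → Relation.ReflTransGen (subD n S).Adj (Sum.inl i)
      (Sum.inl ((i + t) % n)) := by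
  intro t
  induction t with
  | zero =>
    intro i hi
    rw [Nat.add_zero, Nat.mod_eq_of_lt hi]
  | succ t ih =>
    intro i hi
    have hmem : (i, (i + 1) % n) ∈ cycS n := ⟨hi, rfl⟩
    have hp : (i, (i + 1) % n) ∈ S ∩ good n := ⟨hS hmem, cycS_subset_good hn hmem⟩
    have s1 : Relation.ReflTransGen (subD n S).Adj (Sum.inl i)
        (Sum.inl ((i + 1) % n)) :=
      Relation.ReflTransGen.head (subD_adj_am hp)
        (Relation.ReflTransGen.single (subD_adj_ma hp))
    have s2 := ih ((i + 1) % n) (Nat.mod_lt _ (by omega))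
    rw [Nat.mod_add_mod, show i + 1 + t = i + (t + 1) from by omega] at s2
    exact s1.trans s2

lemma reach_a_a {n : ℕ} (hn : 2 ≤ n) {S : Set (ℕ × ℕ)} (hS : cycS n ⊆ S)
    {i j : ℕ} (hi : i < n) (hj : j < n) :
    Relation.ReflTransGen (subD n S).Adj (Sum.inl i) (Sum.inl j) := by
  have := reach_aux hn hS (j + n - i) i hi
  rwa [show i + (j + n - i) = j + n * 1 from by omega, Nat.add_mul_mod_self_left,
    Nat.mod_eq_of_lt hj] at this

lemma subD_strong {n : ℕ} (hn : 2 ≤ n) {S : Set (ℕ × ℕ)} (hS : cycS n ⊆ S) :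
    (subD n S).IsStrong := by
  rintro x hx y hy
  have hreach_to_a : ∀ v ∈ (subD n S).verts, ∀ j < n,
      Relation.ReflTransGen (subD n S).Adj v (Sum.inl j) := by
    rintro v (⟨i, hi, rfl⟩ | ⟨p, hp, rfl⟩) j hj
    · exact reach_a_a hn hS hi hj
    · exact Relation.ReflTransGen.head (subD_adj_ma hp)
        (reach_a_a hn hS hp.2.2.1 hj)
  rcases hy with ⟨i, hi, rfl⟩ | ⟨p, hp, rfl⟩
  · exact hreach_to_a x hx i hi
  · exact (hreach_to_a x hx p.1 hp.2.1).trans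
      (Relation.ReflTransGen.single (subD_adj_am hp))

lemma subD_loopless {n : ℕ} {S : Set (ℕ × ℕ)} : (subD n S).Loopless := by
  rintro v ⟨p, hp, (⟨h1, h2⟩ | ⟨h1, h2⟩)⟩ <;> rw [h1] at h2 <;> exact absurd h2 (by simp)

lemma subD_asym {n : ℕ} {S : Set (ℕ × ℕ)} : (subD n S).Asymmetrical := by
  rintro u v ⟨p, hp, (⟨rfl, rfl⟩ | ⟨rfl, rfl⟩)⟩ ⟨q, hq, (⟨h1, h2⟩ | ⟨h1, h2⟩)⟩
  · exact absurd h1 (by simp)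
  · obtain rfl : q = p := Sum.inr.inj h1.symm
    rw [Sum.inl.inj_iff] at h2
    exact hp.2.2.2 (h2 ▸ rfl)
  · obtain rfl : q = p := Sum.inr.inj h2.symm
    rw [Sum.inl.inj_iff] at h1
    exact hp.2.2.2 (h1 ▸ rfl)
  · exact absurd h2 (by simp)

lemma subD_finite {n : ℕ} {S : Set (ℕ × ℕ)} : (subD n S).verts.Finite := by
  apply Set.Finite.union
  · exact (Set.finite_Iio n).image _
  · apply Set.Finite.image
    apply Set.Finite.subset ((Set.finite_Iio n).prod (Set.finite_Iio n))
    rintro ⟨a, b⟩ ⟨-, ha, hb, -⟩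
    exact ⟨ha, hb⟩

lemma subD_sub {n : ℕ} {S : Set (ℕ × ℕ)} : (subD n S).IsSubdigraph (bigD n) := by
  constructor
  · apply Set.union_subset_union_right
    exact Set.image_mono (Set.inter_subset_inter_left _ (Set.subset_univ _))
  · rintro u v ⟨p, hp, h⟩
    exact ⟨p, ⟨trivial, hp.2⟩, h⟩

def cf (n : ℕ) (z : ZMod (2 * n)) : Vt :=
  if z.val % 2 = 0 then Sum.inl (z.val / 2)
  else Sum.inr (z.val / 2, (z.val / 2 + 1) % n)

lemma cyc0 {n : ℕ} (hn : 2 ≤ n) : (subD n (cycS n)).IsCycleOfLength (2 * n) := by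
  haveI : NeZero (2 * n) := ⟨by omega⟩
  haveI : Fact (1 < 2 * n) := ⟨by omega⟩
  have hval : ∀ z : ZMod (2 * n), z.val < 2 * n := fun z => ZMod.val_lt z
  have hvals : ∀ m : ℕ, m < 2 * n → ((m : ZMod (2 * n))).val = m := fun m hm => by
    rw [ZMod.val_natCast, Nat.mod_eq_of_lt hm]
  have hcfe : ∀ m : ℕ, m < n → cf n ((2 * m : ℕ) : ZMod (2 * n)) = Sum.inl m := by
    intro m hm
    unfold cf
    rw [hvals (2 * m) (by omega)]
    rw [if_pos (Nat.mul_mod_right 2 m), Nat.mul_div_cancel_left m (by omega)]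
  have hcfo : ∀ m : ℕ, m < n →
      cf n ((2 * m + 1 : ℕ) : ZMod (2 * n)) = Sum.inr (m, (m + 1) % n) := by
    intro m hm
    unfold cf
    rw [hvals (2 * m + 1) (by omega)]
    rw [if_neg (by omega), show (2 * m + 1) / 2 = m from by omega]
  have hcyc_inter : cycS n ∩ good n = cycS n :=
    Set.inter_eq_self_of_subset_left (cycS_subset_good hn)
  refine ⟨by omega, cf n, ?_, ?_, ?_⟩
  · -- injective
    intro z w h
    unfold cf at h
    have hz := hval z
    have hw := hval w
    have hzw : z.val = w.val := by
      by_cases h1 : z.val % 2 = 0 <;> by_cases h2 : w.val % 2 = 0 <;>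
        simp only [h1, h2, if_pos, if_neg, if_true, if_false] at h
      all_goals first
        | (have := Sum.inl.inj h; omega)
        | (have := (Prod.mk.injEq _ _ _ _).mp (Sum.inr.inj h); omega)
        | (exact (Sum.inr_ne_inl h).elim)
        | (exact (Sum.inl_ne_inr h).elim)
    exact ZMod.val_injective _ hzw
  · -- verts = range
    ext v
    simp only [subD, hcyc_inter, Set.mem_union, Set.mem_image, Set.mem_setOf_eq,
      Set.mem_range]
    constructor
    · rintro (⟨i, hi, rfl⟩ | ⟨p, hp, rfl⟩)
      · exact ⟨((2 * i : ℕ) : ZMod (2 * n)), hcfe i hi⟩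
      · obtain ⟨t, j⟩ := p
        obtain ⟨ht, rfl⟩ : t < n ∧ j = (t + 1) % n := hp
        exact ⟨((2 * t + 1 : ℕ) : ZMod (2 * n)), hcfo t ht⟩
    · rintro ⟨z, rfl⟩
      have hz := hval z
      unfold cf
      by_cases h1 : z.val % 2 = 0
      · rw [if_pos h1]
        exact Or.inl ⟨z.val / 2, by omega, rfl⟩
      · rw [if_neg h1]
        exact Or.inr ⟨(z.val / 2, (z.val / 2 + 1) % n), ⟨by omega, rfl⟩, rfl⟩
  · -- adjacency
    intro u v
    have hsucc : ∀ z : ZMod (2 * n), (z + 1).val = (z.val + 1) % (2 * n) := by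
      intro z
      rw [ZMod.val_add, ZMod.val_one]
    constructor
    · rintro ⟨p, hp, (⟨rfl, rfl⟩ | ⟨rfl, rfl⟩)⟩
      · obtain ⟨t, j⟩ := p
        obtain ⟨ht, rfl⟩ : t < n ∧ j = (t + 1) % n := hp.1
        refine ⟨((2 * t : ℕ) : ZMod (2 * n)), (hcfe t ht).symm, ?_⟩
        have : ((2 * t : ℕ) : ZMod (2 * n)) + 1 = ((2 * t + 1 : ℕ) : ZMod (2 * n)) := by
          push_cast; ring
        rw [this, hcfo t ht]
      · obtain ⟨t, j⟩ := p
        obtain ⟨ht, rfl⟩ : t < n ∧ j = (t + 1) % n := hp.1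
        refine ⟨((2 * t + 1 : ℕ) : ZMod (2 * n)), (hcfo t ht).symm, ?_⟩
        have h1 : ((2 * t + 1 : ℕ) : ZMod (2 * n)) + 1
            = ((2 * (t + 1) : ℕ) : ZMod (2 * n)) := by
          push_cast; ring
        rw [h1]
        unfold cf
        rw [ZMod.val_natCast, Nat.mul_mod_mul_left 2 (t + 1) n,
          if_pos (Nat.mul_mod_right 2 _), Nat.mul_div_cancel_left _ (by omega)]
    · rintro ⟨z, rfl, rfl⟩
      have hz := hval z
      have hz1 := hsucc z
      by_cases h1 : z.val % 2 = 0
      · -- z even: arc inl t → inr (t, (t+1)%n)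
        set t := z.val / 2 with htdef
        have ht : t < n := by omega
        have hcu : cf n z = Sum.inl t := by unfold cf; rw [if_pos h1]
        have hzval : z.val + 1 = 2 * t + 1 := by omega
        have hlt : 2 * t + 1 < 2 * n := by omega
        have hcv : cf n (z + 1) = Sum.inr (t, (t + 1) % n) := by
          unfold cf
          rw [hz1, hzval, Nat.mod_eq_of_lt hlt,
            if_neg (show ¬(2 * t + 1) % 2 = 0 from by omega),
            show (2 * t + 1) / 2 = t from by omega]
        rw [hcu, hcv]
        exact ⟨(t, (t + 1) % n), ⟨⟨ht, rfl⟩, cycS_subset_good hn ⟨ht, rfl⟩⟩,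
          Or.inl ⟨rfl, rfl⟩⟩
      · -- z odd: arc inr (t, (t+1)%n) → inl ((t+1)%n)
        set t := z.val / 2 with htdef
        have ht : t < n := by omega
        have hcu : cf n z = Sum.inr (t, (t + 1) % n) := by unfold cf; rw [if_neg h1]
        have hzval : z.val + 1 = 2 * (t + 1) := by omega
        have hcv : cf n (z + 1) = Sum.inl ((t + 1) % n) := by
          unfold cf
          rw [hz1, hzval, Nat.mul_mod_mul_left 2 (t + 1) n,
            if_pos (Nat.mul_mod_right 2 _),
            Nat.mul_div_cancel_left _ (show 0 < 2 from by omega)]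
        rw [hcu, hcv]
        exact ⟨(t, (t + 1) % n), ⟨⟨ht, rfl⟩, cycS_subset_good hn ⟨ht, rfl⟩⟩,
          Or.inr ⟨rfl, rfl⟩⟩

lemma earSeq_x0 {n s : ℕ} : (earSeq n s).x 0 = Sum.inl (eI n s).1 := rfl
lemma earSeq_x1 {n s : ℕ} : (earSeq n s).x 1 = Sum.inr (eI n s) := rfl
lemma earSeq_x2 {n s : ℕ} : (earSeq n s).x 2 = Sum.inl (eI n s).2 := rfl
lemma earSeq_len {n s : ℕ} : (earSeq n s).len = 2 := rfl

lemma mem_Ssets_good {n s : ℕ} {p : ℕ × ℕ} (hs : s < n * (n - 2))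
    (hp : p ∈ Ssets n s ∩ good n) : p ≠ eI n s := by
  rintro rfl
  rcases hp.1 with h | ⟨t, ht, hteq⟩
  · exact eI_not_cycS hs h
  · have ht' : t < s := ht
    have := eI_inj (lt_trans ht' hs) hs hteq
    omega

lemma isEar_lemma {n s : ℕ} (hs : s < n * (n - 2)) :
    IsEarOf (bigD n) (subD n (Ssets n s)) (earSeq n s) := by
  have hg := eI_good hs
  refine ⟨by rw [earSeq_len]; omega, ?_, ?_, ?_, ?_, ?_⟩
  · intro i hi
    rw [earSeq_len] at hi
    interval_cases i
    · rw [earSeq_x0, earSeq_x1]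
      exact ⟨eI n s, ⟨trivial, hg⟩, Or.inl ⟨rfl, rfl⟩⟩
    · rw [earSeq_x1, earSeq_x2]
      exact ⟨eI n s, ⟨trivial, hg⟩, Or.inr ⟨rfl, rfl⟩⟩
  · rw [earSeq_x0]
    exact Or.inl ⟨(eI n s).1, hg.1, rfl⟩
  · rw [earSeq_len, earSeq_x2]
    exact Or.inl ⟨(eI n s).2, hg.2.1, rfl⟩
  · intro i hi0 hi2
    rw [earSeq_len] at hi2
    obtain rfl : i = 1 := by omega
    rw [earSeq_x1]
    rintro (⟨j, hj, hje⟩ | ⟨q, hq, hqe⟩)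
    · exact absurd hje (by simp)
    · exact mem_Ssets_good hs hq (Sum.inr.inj hqe)
  · intro i hi j hj h
    rw [earSeq_len] at hi hj
    interval_cases i <;> interval_cases j <;>
      simp only [earSeq_x0, earSeq_x1, earSeq_x2] at h <;>
      first
        | (left; rfl)
        | (exact (Sum.inr_ne_inl h).elim)
        | (exact (Sum.inl_ne_inr h).elim)
        | (exact Or.inr (Or.inl ⟨rfl, rfl⟩))
        | (exact Or.inr (Or.inr ⟨rfl, rfl⟩))

lemma Ssets_succ {n s : ℕ} : Ssets n (s + 1) = Ssets n s ∪ {eI n s} := by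
  unfold Ssets
  rw [show {t | t < s + 1} = {t | t < s} ∪ {s} from by ext t; simp; omega,
    Set.image_union, Set.image_singleton, Set.union_assoc]

lemma step_lemma {n s : ℕ} (hs : s < n * (n - 2)) :
    subD n (Ssets n (s + 1)) = (subD n (Ssets n s)).union (earSeq n s).toDigr := by
  have hg := eI_good hs
  have hxv : (earSeq n s).x '' {i | i ≤ (earSeq n s).len}
      = {Sum.inl (eI n s).1, Sum.inr (eI n s), Sum.inl (eI n s).2} := by
    ext v
    simp only [earSeq_len, Set.mem_image, Set.mem_setOf_eq, Set.mem_insert_iff,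
      Set.mem_singleton_iff]
    constructor
    · rintro ⟨i, hi, rfl⟩
      interval_cases i
      · exact Or.inl earSeq_x0
      · exact Or.inr (Or.inl earSeq_x1)
      · exact Or.inr (Or.inr earSeq_x2)
    · rintro (rfl | rfl | rfl)
      · exact ⟨0, by omega, rfl⟩
      · exact ⟨1, by omega, rfl⟩
      · exact ⟨2, by omega, rfl⟩
  have hinter : Ssets n (s + 1) ∩ good n = (Ssets n s ∩ good n) ∪ {eI n s} := by
    rw [Ssets_succ, Set.union_inter_distrib_right]
    congr 1
    exact Set.inter_eq_self_of_subset_left (by rintro q rfl; exact hg)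
  apply Digr.ext'
  · show (subD n (Ssets n (s+1))).verts
      = (subD n (Ssets n s)).verts ∪ (earSeq n s).toDigr.verts
    show (Sum.inl '' {i | i < n}) ∪ (Sum.inr '' (Ssets n (s+1) ∩ good n))
      = ((Sum.inl '' {i | i < n}) ∪ (Sum.inr '' (Ssets n s ∩ good n)))
        ∪ (earSeq n s).x '' {i | i ≤ (earSeq n s).len}
    rw [hxv, hinter, Set.image_union, Set.image_singleton]
    ext v
    simp only [Set.mem_union, Set.mem_image, Set.mem_setOf_eq,
      Set.mem_insert_iff, Set.mem_singleton_iff]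
    constructor
    · rintro (h | h | h)
      · exact Or.inl (Or.inl h)
      · exact Or.inl (Or.inr h)
      · exact Or.inr (Or.inr (Or.inl h))
    · rintro ((h | h) | (h | h | h))
      · exact Or.inl h
      · exact Or.inr (Or.inl h)
      · exact Or.inl ⟨(eI n s).1, hg.1, h.symm⟩
      · exact Or.inr (Or.inr h)
      · exact Or.inl ⟨(eI n s).2, hg.2.1, h.symm⟩
  · funext u v
    apply propext
    show (∃ p ∈ Ssets n (s+1) ∩ good n,
        (u = Sum.inl p.1 ∧ v = Sum.inr p) ∨ (u = Sum.inr p ∧ v = Sum.inl p.2))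
      ↔ (∃ p ∈ Ssets n s ∩ good n,
        (u = Sum.inl p.1 ∧ v = Sum.inr p) ∨ (u = Sum.inr p ∧ v = Sum.inl p.2))
        ∨ (∃ i < (earSeq n s).len, u = (earSeq n s).x i ∧ v = (earSeq n s).x (i+1))
    rw [hinter]
    constructor
    · rintro ⟨p, (hp | hp), harc⟩
      · exact Or.inl ⟨p, hp, harc⟩
      · right
        obtain rfl : p = eI n s := hp
        rcases harc with ⟨rfl, rfl⟩ | ⟨rfl, rfl⟩
        · exact ⟨0, by rw [earSeq_len]; omega, earSeq_x0.symm, earSeq_x1.symm⟩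
        · exact ⟨1, by rw [earSeq_len]; omega, earSeq_x1.symm, earSeq_x2.symm⟩
    · rintro (⟨p, hp, harc⟩ | ⟨i, hi, rfl, rfl⟩)
      · exact ⟨p, Or.inl hp, harc⟩
      · rw [earSeq_len] at hi
        interval_cases i
        · exact ⟨eI n s, Or.inr rfl, Or.inl ⟨earSeq_x0, earSeq_x1⟩⟩
        · exact ⟨eI n s, Or.inr rfl, Or.inr ⟨earSeq_x1, earSeq_x2⟩⟩

lemma top_lemma {n : ℕ} (hn : 2 ≤ n) :
    subD n (Ssets n (n * (n - 2))) = bigD n := by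
  apply subD_eq
  ext p
  simp only [Set.mem_inter_iff, Set.mem_univ, true_and]
  constructor
  · rintro ⟨-, h⟩; exact h
  · intro hp
    refine ⟨?_, hp⟩
    rcases good_covered hn hp with h | ⟨s, hs, h⟩
    · exact Or.inl h
    · exact Or.inr ⟨s, hs, h⟩

lemma Ssets_zero {n : ℕ} : Ssets n 0 = cycS n := by
  unfold Ssets
  rw [show {t | t < 0} = (∅ : Set ℕ) from by ext t; simp, Set.image_empty,
    Set.union_empty]

end LE2





/-- The oriented chromatic number is unbounded on `LE_2`:
for every `k` there is a strong asymmetrical (finite, loopless) digraph with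
an ear decomposition all of whose ears have length at least 2, admitting no
homomorphism into any tournament on `k` vertices. -/
theorem oriented_chromatic_unbounded_on_LE2 :
    ∀ k : ℕ, ∃ (V : Type) (D : Digr V), D.verts.Finite ∧ D.Loopless ∧
      D.Asymmetrical ∧ D.IsStrong ∧ InLE D 2 ∧
      ¬ OrientedChromAtMost D k := by
  intro k
  set n := k + 2 with hndef
  have hn : 2 ≤ n := by omega
  refine ⟨LE2.Vt, LE2.bigD n, LE2.subD_finite, LE2.subD_loopless, LE2.subD_asym,
    LE2.subD_strong hn (Set.subset_univ _), ?_, ?_⟩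
  · -- InLE (bigD n) 2
    refine ⟨⟨n * (n - 2), fun s => LE2.subD n (LE2.Ssets n s), LE2.earSeq n,
      ?_, ?_, ?_, ?_, ?_, ?_⟩, ?_⟩
    · show (LE2.subD n (LE2.Ssets n 0)).IsCycleDigr
      rw [LE2.Ssets_zero]
      exact ⟨2 * n, LE2.cyc0 hn⟩
    · intro i _
      exact LE2.subD_strong hn Set.subset_union_left
    · intro i _
      exact LE2.subD_sub
    · intro i hi
      exact LE2.isEar_lemma hi
    · intro i hi
      exact LE2.step_lemma hi
    · exact LE2.top_lemma hn
    · intro i _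
      rw [LE2.earSeq_len]
  · -- no homomorphism into a tournament on k vertices
    rintro ⟨T, hT, φ, hφ⟩
    have inj : ∀ i < n, ∀ j < n, i ≠ j → φ (Sum.inl i) ≠ φ (Sum.inl j) := by
      intro i hi j hj hij heq
      have hg : ((i, j) : ℕ × ℕ) ∈ Set.univ ∩ LE2.good n := ⟨trivial, hi, hj, hij⟩
      have t1 := hφ _ _ (LE2.subD_adj_am hg)
      have t2 := hφ _ _ (LE2.subD_adj_ma hg)
      simp only at t1 t2
      rw [heq] at t1
      by_cases hxy : φ (Sum.inl j) = φ (Sum.inr (i, j))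
      · exact hT.1 _ (hxy ▸ t1)
      · exact ((hT.2 _ _ hxy).mp t1) t2
    have hinj : Function.Injective (fun t : Fin n => φ (Sum.inl t.val)) := by
      intro a b hab
      by_contra hne
      exact inj a.val a.isLt b.val b.isLt (fun h => hne (Fin.ext h)) hab
    have hcard := Fintype.card_le_of_injective _ hinj
    simp only [Fintype.card_fin] at hcard
    omega
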